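/- Let X be a compact Hausdorff space, A a commutative Banach algebra, and τ ∈ Hom(C(X,A)) with dense range such that T_{x₀} ∘ τ = τ̃_{x₀} ∘ T_{x₀} for some x₀ ∈ X. If C(X,A) is τ-weakly amenable, then A is τ̃_{x₀}-weakly amenable. -/
import Mathlib


/-- `σ`-weak amenability of a Banach algebra `B`: every bounded `σ`-derivation
`D : B → B*` into the dual bimodule `B*` (with actions `(b·Λ)(x) = Λ(x b)`,
`(Λ·b)(x) = Λ(b x)`) is `σ`-inner. -/
def SigmaWeaklyAmenable (B : Type u) [NonUnitalNormedRing B] [NormedSpace ℂ B]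
    (s : B → B) : Prop :=
  ∀ D : B →L[ℂ] (B →L[ℂ] ℂ),
    (∀ a b x, D (a * b) x = D a (s b * x) + D b (x * s a)) →
    ∃ Λ : B →L[ℂ] ℂ, ∀ a x, D a x = Λ (x * s a) - Λ (s a * x)

/-- let `A` be commutative and `τ ∈ Hom(C(X,A))` have dense range
with `T_{x₀} ∘ τ = τ̃_{x₀} ∘ T_{x₀}` for some `x₀ ∈ X`, where
`τ̃_{x₀}(a) = τ(1_a)(x₀)`. If `C(X,A)` is `τ`-weakly amenable, then `A` is
`τ̃_{x₀}`-weakly amenable. -/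
theorem stmt12 {X A : Type u} [TopologicalSpace X] [CompactSpace X] [T2Space X]
    [NonUnitalNormedRing A] [NormedSpace ℂ A] [IsScalarTower ℂ A A]
    [SMulCommClass ℂ A A] [CompleteSpace A]
    (hcomm : ∀ a b : A, a * b = b * a)
    (τ : C(X, A) →L[ℂ] C(X, A)) (hτ : ∀ f g : C(X, A), τ (f * g) = τ f * τ g)
    (hdense : DenseRange τ) (x₀ : X)
    (τx : A →L[ℂ] A) (hτx : ∀ a : A, τx a = τ (ContinuousMap.const X a) x₀)
    (hint : ∀ f : C(X, A), τ f x₀ = τx (f x₀))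
    (hwa : SigmaWeaklyAmenable C(X, A) τ) : SigmaWeaklyAmenable A τx := by
  intro D hD
  -- C(X,A) is commutative
  have hcommC : ∀ f g : C(X, A), f * g = g * f := by
    intro f g; ext y; exact hcomm (f y) (g y)
  -- evaluation at x₀
  set Ev : C(X, A) →L[ℂ] A := ContinuousMap.evalCLM ℂ x₀ with hEv
  have hEvApp : ∀ f : C(X, A), Ev f = f x₀ := fun _ => rfl
  -- lifted derivation
  set Dt : C(X, A) →L[ℂ] (C(X, A) →L[ℂ] ℂ) :=
    (((ContinuousLinearMap.compSL C(X, A) A ℂ (RingHom.id ℂ) (RingHom.id ℂ)).flip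
        Ev)).comp (D.comp Ev) with hDt
  have hDtApp : ∀ f g : C(X, A), Dt f g = D (f x₀) (g x₀) := fun _ _ => rfl
  have hder : ∀ f g h : C(X, A), Dt (f * g) h = Dt f (τ g * h) + Dt g (h * τ f) := by
    intro f g h
    simp only [hDtApp, ContinuousMap.mul_apply]
    rw [hD (f x₀) (g x₀) (h x₀), hint g, hint f]
  obtain ⟨Λ, hΛ⟩ := hwa Dt hder
  refine ⟨0, fun a x => ?_⟩
  have h1 : D a x = Dt (ContinuousMap.const X a) (ContinuousMap.const X x) := rfl
  rw [h1, hΛ, hcommC]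
  simp
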